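/- arXiv:2602.02668 — 4 statements merged into one kernel-verified Lean document; each statement's English description precedes it below -/
import Mathlib

section
/- For every point (x,y,z) on the unit sphere in ℝ³ (i.e. x²+y²+z²=1), the 4×4 matrix M with rows (0, x, -y, z), (x, 0, z, y), (y, z, 0, -x), (z, -y, -x, 0) is a special orthogonal matrix: MᵀM = I and det M = 1. -/
open Matrix

def sphereMatrix (x y z : ℝ) : Matrix (Fin 4) (Fin 4) ℝ :=
  !![0, x, -y, z; x, 0, z, y; y, z, 0, -x; z, -y, -x, 0]

theorem sphereMatrix_transpose_mul_self (x y z : ℝ) :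
    (sphereMatrix x y z)ᵀ * sphereMatrix x y z =
      (x ^ 2 + y ^ 2 + z ^ 2) • (1 : Matrix (Fin 4) (Fin 4) ℝ) := by
  ext i j
  fin_cases i <;> fin_cases j <;>
    simp [sphereMatrix, Matrix.mul_apply, Fin.sum_univ_succ] <;> ring

theorem sphereMatrix_det (x y z : ℝ) :
    (sphereMatrix x y z).det = (x ^ 2 + y ^ 2 + z ^ 2) ^ 2 := by
  simp [sphereMatrix, Matrix.det_succ_row_zero, Fin.sum_univ_succ, Fin.succAbove]
  ring

theorem stmt0 (x y z : ℝ) (h : x^2 + y^2 + z^2 = 1) :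
    let M : Matrix (Fin 4) (Fin 4) ℝ :=
      !![0, x, -y, z; x, 0, z, y; y, z, 0, -x; z, -y, -x, 0]
    Mᵀ * M = 1 ∧ M.det = 1 := by
  have orthogonal := sphereMatrix_transpose_mul_self x y z
  have det := sphereMatrix_det x y z
  rw [h, one_smul] at orthogonal
  rw [h, one_pow] at det
  exact ⟨orthogonal, det⟩
end

section
/- Let a = ±√(1/3). The 4×4 matrix with rows (0, -a, a, a), (-a, 0, -a, a), (a, a, 0, a), (-a, a, a, 0) is a special orthogonal matrix with zero diagonal. -/
/-! The matrix is `a • S` for the `±1`-pattern `S` with zero diagonal below, a conference matrix of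
order 4: its columns are pairwise orthogonal of squared length 3, so `Sᵀ * S = 3` and `det S = 9`.
Hence `(a • S)ᵀ * (a • S) = 3 a² = 1` and `det (a • S) = a⁴ · 9 = 1` when `a² = 1/3`. -/

open Matrix

namespace ConferenceMatrix

def pattern (R : Type*) [CommRing R] : Matrix (Fin 4) (Fin 4) R :=
  !![0, -1, 1, 1; -1, 0, -1, 1; 1, 1, 0, 1; -1, 1, 1, 0]

variable {R : Type*} [CommRing R]

theorem transpose_mul_self : (pattern R)ᵀ * pattern R = 3 := by
  ext i j
  fin_cases i <;> fin_cases j <;>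
    simp [pattern, mul_apply, Fin.sum_univ_four, ofNat_apply] <;> norm_num

theorem det_pattern : (pattern R).det = 9 := by
  simp [pattern, det_succ_row_zero, Fin.sum_univ_succ, Fin.succAbove]
  norm_num

theorem pattern_apply_self (i : Fin 4) : pattern R i i = 0 := by
  fin_cases i <;> rfl

theorem smul_pattern (a : R) :
    a • pattern R = !![0, -a, a, a; -a, 0, -a, a; a, a, 0, a; -a, a, a, 0] := by
  ext i j
  fin_cases i <;> fin_cases j <;> simp [pattern]

end ConferenceMatrix

open ConferenceMatrix in
theorem stmt8 (a : ℝ) (ha : a = Real.sqrt (1/3) ∨ a = -Real.sqrt (1/3)) :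
    let M : Matrix (Fin 4) (Fin 4) ℝ :=
      !![0, -a, a, a; -a, 0, -a, a; a, a, 0, a; -a, a, a, 0]
    Mᵀ * M = 1 ∧ M.det = 1 ∧ ∀ i : Fin 4, M i i = 0 := by
  have ha2 : a ^ 2 = 1 / 3 := by
    rcases ha with rfl | rfl <;> simp
  intro M
  rw [show M = a • pattern ℝ from (smul_pattern a).symm]
  refine ⟨?_, ?_, fun i => by simp [pattern_apply_self]⟩
  · rw [transpose_smul, smul_mul_smul_comm, transpose_mul_self, ← sq, ha2]
    ext i j
    simp [ofNat_apply, one_apply]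
  · rw [det_smul, det_pattern, Fintype.card_fin, show a ^ 4 = (a ^ 2) ^ 2 by ring, ha2]
    norm_num
end

section
/- Every 3×3 real special orthogonal matrix M with M₁₁ = 0 and M₂₂ = 0 satisfies: either M₁₂ = ±1 (and then row 1 is (0, ±1, 0) and column 2 is (±1, 0, 0)ᵀ) or M₂₁ = ±1 (and then row 2 is (±1, 0, 0) and column 1 is (0, ±1, 0)ᵀ). -/
open Matrix

theorem stmt12 (M : Matrix (Fin 3) (Fin 3) ℝ)
    (horth : Mᵀ * M = 1) (hdet : M.det = 1)
    (h11 : M 0 0 = 0) (h22 : M 1 1 = 0) :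
    ((M 0 1 = 1 ∨ M 0 1 = -1) ∧ M 0 2 = 0 ∧ M 2 1 = 0) ∨
    ((M 1 0 = 1 ∨ M 1 0 = -1) ∧ M 1 2 = 0 ∧ M 2 0 = 0) := by
  have hrow : M * Mᵀ = 1 := mul_eq_one_comm.mp horth
  have e1 : M 0 0 * M 0 0 + M 0 1 * M 0 1 + M 0 2 * M 0 2 = 1 := by
    have := congrFun (congrFun hrow 0) 0
    simpa [Matrix.mul_apply, Fin.sum_univ_three, Matrix.transpose_apply,
      Matrix.one_apply] using this
  have e2 : M 1 0 * M 1 0 + M 1 1 * M 1 1 + M 1 2 * M 1 2 = 1 := by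
    have := congrFun (congrFun hrow 1) 1
    simpa [Matrix.mul_apply, Fin.sum_univ_three, Matrix.transpose_apply,
      Matrix.one_apply] using this
  have e3 : M 0 0 * M 1 0 + M 0 1 * M 1 1 + M 0 2 * M 1 2 = 0 := by
    have := congrFun (congrFun hrow 0) 1
    simpa [Matrix.mul_apply, Fin.sum_univ_three, Matrix.transpose_apply,
      Matrix.one_apply] using this
  have e4 : M 0 1 * M 0 1 + M 1 1 * M 1 1 + M 2 1 * M 2 1 = 1 := by
    have := congrFun (congrFun horth 1) 1
    simpa [Matrix.mul_apply, Fin.sum_univ_three, Matrix.transpose_apply,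
      Matrix.one_apply] using this
  have e5 : M 0 0 * M 0 0 + M 1 0 * M 1 0 + M 2 0 * M 2 0 = 1 := by
    have := congrFun (congrFun horth 0) 0
    simpa [Matrix.mul_apply, Fin.sum_univ_three, Matrix.transpose_apply,
      Matrix.one_apply] using this
  have hprod : M 0 2 * M 1 2 = 0 := by
    rw [h11, h22] at e3; linarith [e3]
  rcases mul_eq_zero.mp hprod with h02 | h12
  · left
    have hsq : (M 0 1 - 1) * (M 0 1 + 1) = 0 := by nlinarith
    have h21 : M 2 1 * M 2 1 = 0 := by nlinarith
    refine ⟨?_, h02, mul_self_eq_zero.mp h21⟩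
    rcases mul_eq_zero.mp hsq with h | h
    · exact Or.inl (by linarith)
    · exact Or.inr (by linarith)
  · right
    have hsq : (M 1 0 - 1) * (M 1 0 + 1) = 0 := by nlinarith
    have h20 : M 2 0 * M 2 0 = 0 := by nlinarith
    refine ⟨?_, h12, mul_self_eq_zero.mp h20⟩
    rcases mul_eq_zero.mp hsq with h | h
    · exact Or.inl (by linarith)
    · exact Or.inr (by linarith)
end

section
/- Let S⁺₊₊₊ be the sphere component of hollow SO(4) given as the image of (x,y,z) ↦ rows [(0,x,-y,z),(x,0,z,y),(y,z,0,-x),(z,-y,-x,0)] over 𝕊², and let S⁻₋₊₊ be the image over 𝕊² of the parametrization obtained from this one by negating the second column and the first row. Then S⁺₊₊₊ and S⁻₋₊₊ intersect only in matrices that are signed permutation matrices, i.e. matrices whose entries lie in {-1,0,1}. -/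
open Matrix

theorem stmt18 (x y z x' y' z' : ℝ)
    (h1 : x^2 + y^2 + z^2 = 1) (h2 : x'^2 + y'^2 + z'^2 = 1)
    (h : (!![0, x, -y, z; x, 0, z, y; y, z, 0, -x; z, -y, -x, 0] : Matrix (Fin 4) (Fin 4) ℝ)
       = !![0, x', y', -z'; x', 0, z', y'; y', -z', 0, -x'; z', y', -x', 0]) :
    ∀ i j : Fin 4,
      (!![0, x, -y, z; x, 0, z, y; y, z, 0, -x; z, -y, -x, 0] : Matrix (Fin 4) (Fin 4) ℝ) i j = -1 ∨
      (!![0, x, -y, z; x, 0, z, y; y, z, 0, -x; z, -y, -x, 0] : Matrix (Fin 4) (Fin 4) ℝ) i j = 0 ∨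
      (!![0, x, -y, z; x, 0, z, y; y, z, 0, -x; z, -y, -x, 0] : Matrix (Fin 4) (Fin 4) ℝ) i j = 1 := by
  have e02 := congrFun (congrFun h 0) 2
  have e20 := congrFun (congrFun h 2) 0
  have e03 := congrFun (congrFun h 0) 3
  have e30 := congrFun (congrFun h 3) 0
  simp [Matrix.cons_val_zero, Matrix.cons_val_one] at e02 e20 e03 e30
  have hy : y = 0 := by linarith
  have hz : z = 0 := by linarith
  have hx : x = 1 ∨ x = -1 := by
    have : x^2 = 1 := by rw [hy, hz] at h1; linarith
    rcases mul_self_eq_one_iff.mp (by nlinarith : x * x = 1) with h' | h'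
    · exact Or.inl h'
    · exact Or.inr h'
  intro i j
  fin_cases i <;> fin_cases j <;> rcases hx with h' | h' <;> simp [hy, hz, h', Matrix.vecHead, Matrix.vecTail]
end
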